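/- arXiv:1111.5932 — 4 statements merged into one kernel-verified Lean document; each statement's English description precedes it below -/
import Mathlib

section
/- The Whitney map w : S^n → ℂ^n defined on S^n = {(x,y) ∈ ℝ^n × ℝ : |x|² + y² = 1} by w(x,y) = (1+iy)·x has exactly one double point: if w(x,y) = w(x',y') with (x,y) ≠ (x',y'), then {(x,y),(x',y')} = {(0,1),(0,-1)}. -/
open Complex

/-- The Whitney map `w(x,y) = (1+iy)·x` on `S^n ⊂ ℝ^n × ℝ` has exactly one
double point: any two distinct preimages of a common value are `(0,1)` and `(0,-1)`. -/
theorem whitney_one_double_point (n : ℕ) (hn : 1 ≤ n)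
    (x x' : Fin n → ℝ) (y y' : ℝ)
    (hxy : ∑ j, (x j) ^ 2 + y ^ 2 = 1)
    (hxy' : ∑ j, (x' j) ^ 2 + y' ^ 2 = 1)
    (heq : (fun j => (1 + (y : ℂ) * I) * (x j : ℂ)) =
           (fun j => (1 + (y' : ℂ) * I) * (x' j : ℂ)))
    (hne : (x, y) ≠ (x', y')) :
    ({(x, y), (x', y')} : Set ((Fin n → ℝ) × ℝ)) =
      {((fun _ => 0), 1), ((fun _ => 0), -1)} := by
  have h1 : ∀ j, x j = x' j ∧ y * x j = y' * x' j := by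
    intro j
    have h := congrFun heq j
    rw [Complex.ext_iff] at h
    simpa using h
  have hx : x = x' := funext fun j => (h1 j).1
  have hy : y ≠ y' := by
    intro h; exact hne (by rw [hx, h])
  have hx0 : x = fun _ => 0 := by
    funext j
    by_contra h0
    apply hy
    have h2 := (h1 j).2
    rw [← (h1 j).1] at h2
    exact mul_right_cancel₀ h0 h2
  have hx'0 : x' = fun _ => 0 := by rw [← hx]; exact hx0
  have hy2 : y ^ 2 = 1 := by rw [hx0] at hxy; simpa using hxy
  have hy'2 : y' ^ 2 = 1 := by rw [hx'0] at hxy'; simpa using hxy'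
  have hy1 : y = 1 ∨ y = -1 := by
    have h : (y - 1) * (y + 1) = 0 := by nlinarith
    rcases mul_eq_zero.mp h with h | h
    · left; linarith
    · right; linarith
  have hy'1 : y' = 1 ∨ y' = -1 := by
    have h : (y' - 1) * (y' + 1) = 0 := by nlinarith
    rcases mul_eq_zero.mp h with h | h
    · left; linarith
    · right; linarith
  subst hx0 hx'0
  rcases hy1 with h | h <;> rcases hy'1 with h' | h' <;> subst h h'
  · exact absurd rfl hy
  · rfl
  · exact Set.pair_comm _ _
  · exact absurd rfl hy
end

section
/- Let k ≥ 0 be an integer. A function u, holomorphic on the open unit disk D ⊂ ℂ and continuous on its closure, satisfies u(e^{it}) ∈ e^{ikt}·ℝ for all t ∈ ℝ if and only if u is a polynomial u(z) = Σ_{j=0}^{2k} a_j z^j with a_{2k-j} = conj(a_j) for all 0 ≤ j ≤ 2k. In particular, the real vector space of such functions has dimension 2k+1. -/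
/-!
On the unit circle `conj ζ = ζ⁻¹`, so `u(ζ) ∈ ζ^k ℝ` says `ζ^{2k} conj (u ζ) = u ζ`. For the
Fourier coefficients `c_m` of `u` on the circle this reads `conj c_m = c_{2k-m}`. By Cauchy's
formula `c_m` is the `m`-th Taylor coefficient of `u` at `0` for `m ≥ 0` and `c_m = 0` for
`m < 0`. Hence the Taylor coefficients vanish beyond `2k` and satisfy `c_{2k-j} = conj c_j`, so
`u` is that polynomial on the open disk, and on the closed disk by continuity. Conversely the
substitution `j ↦ 2k - j` shows that such a polynomial satisfies the boundary condition.
-/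

open Complex ComplexConjugate Metric Finset
open scoped Real

lemma exists_real_eq_mul_iff {w : ℂ} (hw : ‖w‖ = 1) (v : ℂ) :
    (∃ r : ℝ, v = w * r) ↔ w ^ 2 * conj v = v := by
  have hw' : w * conj w = 1 := by rw [mul_conj', hw]; norm_num
  constructor
  · rintro ⟨r, rfl⟩
    rw [map_mul, conj_ofReal]
    linear_combination w * r * hw'
  · intro hv
    have hreal : conj (conj w * v) = conj w * v := by
      rw [map_mul, conj_conj]
      linear_combination conj w * hv - w * conj v * hw'
    refine ⟨(conj w * v).re, ?_⟩
    rw [conj_eq_iff_re.1 hreal]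
    linear_combination (-v) * hw'

lemma pow_mul_conj_sum_eq_of_conj_symm {a : ℕ → ℂ} {n : ℕ}
    (ha : ∀ j ≤ n, a (n - j) = conj (a j)) {ζ : ℂ} (hζ : ‖ζ‖ = 1) :
    ζ ^ n * conj (∑ j ∈ range (n + 1), a j * ζ ^ j) = ∑ j ∈ range (n + 1), a j * ζ ^ j := by
  have hζ0 : ζ ≠ 0 := norm_ne_zero_iff.1 (by rw [hζ]; exact one_ne_zero)
  conv_rhs => rw [← sum_range_reflect]
  rw [map_sum, mul_sum]
  refine sum_congr rfl fun j hj => ?_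
  have hjn : j ≤ n := Nat.lt_succ_iff.1 (mem_range.1 hj)
  rw [Nat.add_sub_cancel, ha j hjn, map_mul, map_pow, ← inv_eq_conj hζ, pow_sub₀ ζ hζ0 hjn,
    inv_pow]
  ring

noncomputable def unitCircleFourierCoeff (u : ℂ → ℂ) (m : ℤ) : ℂ :=
  (2 * π : ℂ)⁻¹ * ∫ t in (0 : ℝ)..2 * π, exp (t * I) ^ (-m) * u (exp (t * I))

lemma unitCircleFourierCoeff_eq_circleIntegral (u : ℂ → ℂ) (m : ℤ) :
    unitCircleFourierCoeff u m = (2 * π * I)⁻¹ * ∮ z in C(0, 1), z ^ (-m - 1) * u z := by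
  have hint : (∮ z in C(0, 1), z ^ (-m - 1) * u z)
      = I * ∫ t in (0 : ℝ)..2 * π, exp (t * I) ^ (-m) * u (exp (t * I)) := by
    rw [circleIntegral, ← intervalIntegral.integral_const_mul]
    refine intervalIntegral.integral_congr fun t _ => ?_
    simp only [deriv_circleMap, circleMap_zero, ofReal_one, one_mul, smul_eq_mul]
    rw [zpow_sub_one₀ (Complex.exp_ne_zero _)]
    field_simp
  rw [unitCircleFourierCoeff, hint, ← mul_assoc]
  congr 1
  field_simp

lemma unitCircleFourierCoeff_natCast (u : ℂ → ℂ) (n : ℕ) :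
    unitCircleFourierCoeff u n = (cauchyPowerSeries u 0 1).coeff n := by
  rw [unitCircleFourierCoeff_eq_circleIntegral, FormalMultilinearSeries.coeff,
    show (1 : Fin n → ℂ) = fun _ => 1 from rfl, cauchyPowerSeries_apply]
  congr 2
  funext z
  rw [show -(n : ℤ) - 1 = -((n + 1 : ℕ) : ℤ) by push_cast; ring, zpow_neg, zpow_natCast]
  simp only [sub_zero, smul_eq_mul, one_div, inv_pow, pow_succ, mul_inv]
  ring

lemma unitCircleFourierCoeff_eq_zero_of_neg {u : ℂ → ℂ} (hu : DiffContOnCl ℂ u (ball 0 1))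
    {m : ℤ} (hm : m < 0) : unitCircleFourierCoeff u m = 0 := by
  obtain ⟨n, rfl⟩ := Int.eq_negSucc_of_lt_zero hm
  have hpow : ∀ z : ℂ, z ^ (-Int.negSucc n - 1) = z ^ n := fun z => by
    rw [Int.negSucc_eq, neg_neg, add_sub_cancel_right, zpow_natCast]
  simp only [unitCircleFourierCoeff_eq_circleIntegral, hpow]
  have hzero := ((differentiable_pow n).diffContOnCl.smul hu).circleIntegral_eq_zero zero_le_one
  simp only [smul_eq_mul] at hzero
  rw [hzero, mul_zero]

lemma conj_unitCircleFourierCoeff {u : ℂ → ℂ} {n : ℕ}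
    (hb : ∀ t : ℝ, exp (t * I) ^ n * conj (u (exp (t * I))) = u (exp (t * I))) (m : ℤ) :
    conj (unitCircleFourierCoeff u m) = unitCircleFourierCoeff u (n - m) := by
  have h2pi : conj (2 * π : ℂ)⁻¹ = (2 * π : ℂ)⁻¹ := by
    rw [map_inv₀, map_mul, conj_ofReal, map_ofNat]
  rw [unitCircleFourierCoeff, unitCircleFourierCoeff, map_mul, h2pi,
    ← intervalIntegral.intervalIntegral_conj]
  congr 1
  refine intervalIntegral.integral_congr fun t _ => ?_
  have hζ : ‖exp (t * I)‖ = 1 := norm_exp_ofReal_mul_I t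
  have hζ0 : exp (t * I) ≠ 0 := Complex.exp_ne_zero _
  conv_rhs => rw [← hb t]
  rw [map_mul, map_zpow₀, ← inv_eq_conj hζ, inv_zpow', ← mul_assoc, ← zpow_natCast,
    ← zpow_add₀ hζ0]
  ring_nf

lemma HasFPowerSeriesOnBall.eq_sum_range_pow_smul_coeff {𝕜 E : Type*}
    [NontriviallyNormedField 𝕜] [NormedAddCommGroup E] [NormedSpace 𝕜 E] {f : 𝕜 → E}
    {p : FormalMultilinearSeries 𝕜 𝕜 E} {r : ENNReal} {n : ℕ} (hf : HasFPowerSeriesOnBall f p 0 r) (hp : ∀ m, n ≤ m → p.coeff m = 0)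
    {z : 𝕜} (hz : z ∈ eball 0 r) : f z = ∑ j ∈ range n, z ^ j • p.coeff j := by
  have hfin : HasFiniteFPowerSeriesOnBall f p 0 n r :=
    ⟨hf, fun m hm => FormalMultilinearSeries.coeff_eq_zero.1 (hp m hm)⟩
  simpa [FormalMultilinearSeries.partialSum, FormalMultilinearSeries.apply_eq_pow_smul_coeff]
    using hfin.eq_partialSum z hz n le_rfl

section BoundaryCondition

variable {u : ℂ → ℂ} {n : ℕ}

lemma cauchyPowerSeries_coeff_eq_zero_of_lt
    (hb : ∀ t : ℝ, exp (t * I) ^ n * conj (u (exp (t * I))) = u (exp (t * I)))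
    (hu : DiffContOnCl ℂ u (ball 0 1)) {m : ℕ} (hm : n < m) :
    (cauchyPowerSeries u 0 1).coeff m = 0 := by
  rw [← unitCircleFourierCoeff_natCast, ← conj_conj (unitCircleFourierCoeff u m),
    conj_unitCircleFourierCoeff hb, unitCircleFourierCoeff_eq_zero_of_neg hu (by omega), map_zero]

lemma cauchyPowerSeries_coeff_sub_eq_conj
    (hb : ∀ t : ℝ, exp (t * I) ^ n * conj (u (exp (t * I))) = u (exp (t * I)))
    {j : ℕ} (hj : j ≤ n) :
    (cauchyPowerSeries u 0 1).coeff (n - j) = conj ((cauchyPowerSeries u 0 1).coeff j) := by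
  rw [← unitCircleFourierCoeff_natCast, ← unitCircleFourierCoeff_natCast,
    conj_unitCircleFourierCoeff hb, Nat.cast_sub hj]

end BoundaryCondition

/-- One-dimensional Riemann–Hilbert problem with boundary condition of Maslov
index `2k ≥ 0`: a function holomorphic on the open unit disk and continuous on
its closure satisfies `u(e^{it}) ∈ e^{ikt}·ℝ` iff it is a polynomial
`Σ_{j=0}^{2k} a_j z^j` with `a_{2k-j} = conj(a_j)`. -/
theorem rh_problem_nonneg_index (k : ℕ) (u : ℂ → ℂ)
    (hd : DifferentiableOn ℂ u (Metric.ball 0 1))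
    (hc : ContinuousOn u (Metric.closedBall 0 1)) :
    (∀ t : ℝ, ∃ r : ℝ, u (Complex.exp (t * I)) = Complex.exp ((k : ℂ) * t * I) * r) ↔
      ∃ a : ℕ → ℂ, (∀ j ≤ 2 * k, a (2 * k - j) = (starRingEnd ℂ) (a j)) ∧
        ∀ z ∈ Metric.closedBall (0 : ℂ) 1,
          u z = ∑ j ∈ Finset.range (2 * k + 1), a j * z ^ j := by
  have hu : DiffContOnCl ℂ u (ball 0 1) := .mk_ball hd hc
  have hbc : ∀ t : ℝ, (∃ r : ℝ, u (exp (t * I)) = exp (k * t * I) * r) ↔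
      exp (t * I) ^ (2 * k) * conj (u (exp (t * I))) = u (exp (t * I)) := fun t => by
    rw [mul_assoc, exp_nat_mul, pow_mul']
    exact exists_real_eq_mul_iff (by rw [norm_pow, norm_exp_ofReal_mul_I, one_pow]) _
  rw [forall_congr' hbc]
  constructor
  · intro hb
    set p := cauchyPowerSeries u 0 1
    refine ⟨p.coeff, fun j hj => cauchyPowerSeries_coeff_sub_eq_conj hb hj, ?_⟩
    have hball : Set.EqOn u (fun z => ∑ j ∈ range (2 * k + 1), p.coeff j * z ^ j) (ball 0 1) :=
      fun z hz => by
        simp_rw [mul_comm _ (z ^ _), ← smul_eq_mul]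
        exact (hu.hasFPowerSeriesOnBall one_pos).eq_sum_range_pow_smul_coeff
          (fun m hm => cauchyPowerSeries_coeff_eq_zero_of_lt hb hu hm)
          (by rwa [eball_coe, NNReal.coe_one])
    exact hball.of_subset_closure hc (by fun_prop) ball_subset_closedBall
      (closure_ball 0 one_ne_zero).ge
  · rintro ⟨a, ha, hua⟩ t
    rw [hua _ (by simp [norm_exp_ofReal_mul_I])]
    exact pow_mul_conj_sum_eq_of_conj_symm ha (norm_exp_ofReal_mul_I t)
end

section
/- Let k < 0 be an integer. If u is holomorphic on the open unit disk, continuous on the closed disk, and u(e^{it}) ∈ e^{ikt}·ℝ for all t ∈ ℝ, then u ≡ 0. -/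
open Complex

/-!
With `m = -k ≥ 1`, the function `g z = z ^ m * u z` is holomorphic on the disk, continuous up to
the boundary and real on the unit circle, because `e^{imt} e^{ikt} = 1`. Applying the maximum
modulus principle to `exp (± i g)` shows that `g` is real on the whole disk, so by the open mapping
theorem it is constant, equal to `g 0 = 0`. Hence `u` vanishes off the origin, and at the origin
by continuity.
-/

open Metric Set Filter Topology

theorem DiffContOnCl.im_eq_zero_of_forall_mem_frontier {E : Type*} [NormedAddCommGroup E]
    [NormedSpace ℂ E] [Nontrivial E] {U : Set E} {g : E → ℂ} (hU : Bornology.IsBounded U)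
    (hg : DiffContOnCl ℂ g U) (hfr : ∀ z ∈ frontier U, (g z).im = 0) {z : E}
    (hz : z ∈ closure U) : (g z).im = 0 := by
  have key (c : ℝ) : 0 ≤ c * (g z).im := by
    have hexp : DiffContOnCl ℂ (fun w => exp ((c * I) • g w)) U :=
      differentiable_exp.comp_diffContOnCl (hg.const_smul (c * I))
    have hnorm (w : E) : ‖exp ((c * I) • g w)‖ = Real.exp (-(c * (g w).im)) := by
      simp [norm_exp]
    have := norm_le_of_forall_mem_frontier_norm_le hU hexp (C := 1)
      (fun w hw => by rw [hnorm, hfr w hw, mul_zero, neg_zero, Real.exp_zero]) hz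
    rw [hnorm, Real.exp_le_one_iff] at this
    linarith
  linarith [key 1, key (-1)]

theorem AnalyticOnNhd.exists_eq_const_of_im_eq_zero {E : Type*} [NormedAddCommGroup E]
    [NormedSpace ℂ E] {U : Set E} {g : E → ℂ} (hg : AnalyticOnNhd ℂ g U) (hUo : IsOpen U)
    (hU : IsPreconnected U) (him : ∀ z ∈ U, (g z).im = 0) : ∃ w, ∀ z ∈ U, g z = w := by
  refine (hg.is_constant_or_isOpen hU).elim id fun hopen => ⟨0, fun z hz => ?_⟩
  have hreal : g '' U ⊆ interior (im ⁻¹' {0}) :=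
    (hopen U subset_rfl hUo).subset_interior_iff.2 (image_subset_iff.2 him)
  rw [interior_preimage_im, interior_singleton, preimage_empty] at hreal
  exact (hreal (mem_image_of_mem g hz)).elim

theorem ContinuousAt.eq_of_eqOn_diff_singleton {X Y : Type*} [TopologicalSpace X]
    [TopologicalSpace Y] [T2Space Y] {x : X} [(𝓝[≠] x).NeBot] {f : X → Y} {s : Set X} {c : Y}
    (hf : ContinuousAt f x) (hs : s ∈ 𝓝 x) (h : EqOn f (fun _ => c) (s \ {x})) : f x = c := by
  have : f =ᶠ[𝓝[≠] x] fun _ => c :=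
    eventually_nhdsWithin_iff.2 (mem_of_superset hs fun y hy hyx => h ⟨hy, hyx⟩)
  exact ((hf.eventuallyEq_nhds_iff_eventuallyEq_nhdsNE continuousAt_const).1 this).eq_of_nhds

theorem im_pow_mul_eq_zero_of_mem_sphere {k : ℤ} {m : ℕ} (hm : (m : ℤ) = -k) {u : ℂ → ℂ}
    (hb : ∀ t : ℝ, ∃ r : ℝ, u (exp (t * I)) = exp (k * t * I) * r) {z : ℂ}
    (hz : z ∈ sphere 0 1) : (z ^ m * u z).im = 0 := by
  obtain ⟨t, rfl⟩ := (norm_eq_one_iff z).1 (mem_sphere_zero_iff_norm.1 hz)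
  obtain ⟨r, hr⟩ := hb t
  have hmk : (m : ℂ) = -k := by exact_mod_cast hm
  have hunit : exp (t * I) ^ m * exp (k * t * I) = 1 := by
    rw [← exp_nat_mul, ← exp_add, hmk, ← exp_zero]
    ring_nf
  rw [hr, ← mul_assoc, hunit, one_mul, ofReal_im]

/-- One-dimensional Riemann–Hilbert problem with boundary condition of negative
Maslov index `2k < 0`: a function holomorphic on the open unit disk, continuous
on its closure, with `u(e^{it}) ∈ e^{ikt}·ℝ` for all `t`, vanishes identically. -/
theorem rh_problem_negative_index (k : ℤ) (hk : k < 0) (u : ℂ → ℂ)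
    (hd : DifferentiableOn ℂ u (Metric.ball 0 1))
    (hc : ContinuousOn u (Metric.closedBall 0 1))
    (hb : ∀ t : ℝ, ∃ r : ℝ, u (Complex.exp (t * I)) = Complex.exp ((k : ℂ) * t * I) * r) :
    ∀ z ∈ Metric.closedBall (0 : ℂ) 1, u z = 0 := by
  obtain ⟨m, hm⟩ : ∃ m : ℕ, (m : ℤ) = -k := ⟨(-k).toNat, by omega⟩
  set g : ℂ → ℂ := fun z => z ^ m * u z
  have hclosure : closure (ball (0 : ℂ) 1) = closedBall 0 1 := closure_ball 0 one_ne_zero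
  have hg : DiffContOnCl ℂ g (ball 0 1) :=
    ⟨(differentiableOn_pow m).mul hd, hclosure ▸ (continuousOn_pow m).mul hc⟩
  have him : ∀ z ∈ ball (0 : ℂ) 1, (g z).im = 0 := fun z hz =>
    hg.im_eq_zero_of_forall_mem_frontier isBounded_ball
      (fun w hw => im_pow_mul_eq_zero_of_mem_sphere hm hb (frontier_ball_subset_sphere hw))
      (subset_closure hz)
  obtain ⟨w, hw⟩ := (hg.differentiableOn.analyticOnNhd isOpen_ball).exists_eq_const_of_im_eq_zero
    isOpen_ball (convex_ball 0 1).isPreconnected him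
  have hw0 : w = 0 := by
    rw [← hw 0 (mem_ball_self one_pos)]
    simp [g, zero_pow (by omega : m ≠ 0)]
  have hg0 : EqOn g 0 (closedBall 0 1) :=
    EqOn.of_subset_closure (fun z hz => (hw z hz).trans hw0) (hclosure ▸ hg.continuousOn)
      continuousOn_const ball_subset_closedBall hclosure.ge
  have hu : EqOn u 0 (closedBall 0 1 \ {0}) := fun z hz =>
    (mul_eq_zero.1 (hg0 hz.1)).resolve_left (pow_ne_zero m hz.2)
  intro z hz
  rcases eq_or_ne z 0 with rfl | hz0
  · exact (hc.continuousAt (closedBall_mem_nhds 0 one_pos)).eq_of_eqOn_diff_singleton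
      (closedBall_mem_nhds 0 one_pos) hu
  · exact hu ⟨hz, hz0⟩
end

section
/- (Floer–Picard lemma, invertible case.) Let X, B be Banach spaces and f : X → B a map of the form f(x) = f(0) + D x + N(x), where D : X → B is a bounded linear isomorphism with bounded inverse Q = D^{-1}, and N satisfies N(0) = 0 and ‖N(x) - N(y)‖ ≤ C‖x-y‖(‖x‖+‖y‖) for all x, y and some constant C > 0. If ‖Q f(0)‖ ≤ 1/(8 C ‖Q‖), then f has a unique zero x* in the closed ball of radius 1/(4 C ‖Q‖) around 0, and moreover ‖x*‖ ≤ 2‖Q f(0)‖. -/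
/-!
Applying `Q` turns `f x = 0` into `Q f(0) + x + Q N(x) = 0`, a fixed-point problem for
`x ↦ -(Q f(0) + Q N(x))`, where `Q ∘ N` is again quadratic, with constant `C‖Q‖`. On the ball of
radius `r` with `4 C ‖Q‖ r ≤ 1` the quadratic estimate makes this map `1/2`-Lipschitz, and
`‖Q f(0)‖ ≤ r / 2` makes it map the ball into itself, so Banach's fixed point theorem applies.
-/

open Function Metric Set

theorem ContractingWith.existsUnique_isFixedPt_of_mapsTo {α : Type*} [MetricSpace α]
    {K : NNReal} {g : α → α} {s : Set α} (hsc : IsComplete s) (hs : s.Nonempty)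
    (hsg : MapsTo g s s) (hg : ContractingWith K (hsg.restrict g s s)) :
    ∃! x, x ∈ s ∧ IsFixedPt g x := by
  have : CompleteSpace s := hsc.completeSpace_coe
  have : Nonempty s := hs.to_subtype
  refine ⟨hg.fixedPoint, ⟨Subtype.property _, congrArg Subtype.val hg.fixedPoint_isFixedPt⟩, ?_⟩
  rintro y ⟨hys, hy⟩
  exact congrArg Subtype.val (hg.fixedPoint_unique (x := ⟨y, hys⟩) (Subtype.ext hy))

structure IsQuadraticRemainder {E F : Type*} [NormedAddCommGroup E] [NormedAddCommGroup F]
    (K : ℝ) (M : E → F) : Prop where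
  map_zero : M 0 = 0
  norm_sub_le : ∀ x y, ‖M x - M y‖ ≤ K * ‖x - y‖ * (‖x‖ + ‖y‖)

namespace IsQuadraticRemainder

variable {E F : Type*} [NormedAddCommGroup E] [NormedAddCommGroup F] {K : ℝ} {M : E → F}

theorem norm_le (hM : IsQuadraticRemainder K M) (x : E) : ‖M x‖ ≤ K * ‖x‖ * ‖x‖ := by
  simpa [hM.map_zero] using hM.norm_sub_le x 0

theorem comp_continuousLinearMap {G : Type*} [NormedAddCommGroup G] [NormedSpace ℝ F]
    [NormedSpace ℝ G] (hM : IsQuadraticRemainder K M) (L : F →L[ℝ] G) :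
    IsQuadraticRemainder (K * ‖L‖) (L ∘ M) where
  map_zero := by simp [hM.map_zero]
  norm_sub_le x y := calc
    ‖L (M x) - L (M y)‖ = ‖L (M x - M y)‖ := by rw [map_sub]
    _ ≤ ‖L‖ * (K * ‖x - y‖ * (‖x‖ + ‖y‖)) :=
      L.le_opNorm_of_le (hM.norm_sub_le x y)
    _ = K * ‖L‖ * ‖x - y‖ * (‖x‖ + ‖y‖) := by ring

theorem norm_sub_le_half_of_mem_closedBall (hM : IsQuadraticRemainder K M) (hK : 0 ≤ K)
    {r : ℝ} (hKr : 4 * K * r ≤ 1) {x y : E} (hx : x ∈ closedBall 0 r)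
    (hy : y ∈ closedBall 0 r) : ‖M x - M y‖ ≤ 1 / 2 * ‖x - y‖ := by
  rw [mem_closedBall_zero_iff] at hx hy
  calc ‖M x - M y‖ ≤ K * ‖x - y‖ * (‖x‖ + ‖y‖) := hM.norm_sub_le x y
    _ ≤ K * ‖x - y‖ * (2 * r) := by gcongr; linarith
    _ = 2 * (K * r) * ‖x - y‖ := by ring
    _ ≤ 1 / 2 * ‖x - y‖ := by gcongr; linarith

end IsQuadraticRemainder

section IdentityPlusQuadratic

variable {E : Type*} [NormedAddCommGroup E] {M : E → E} {K r : ℝ} {y₀ : E}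

theorem isFixedPt_neg_add_iff {x : E} : IsFixedPt (fun x ↦ -(y₀ + M x)) x ↔ y₀ + x + M x = 0 := by
  rw [IsFixedPt, neg_eq_iff_eq_neg, ← add_eq_zero_iff_eq_neg, add_right_comm]

theorem norm_le_two_mul_of_add_add_eq_zero (hM : IsQuadraticRemainder K M) (hK : 0 ≤ K)
    (hKr : 4 * K * r ≤ 1) {x : E} (hx : ‖x‖ ≤ r) (h : y₀ + x + M x = 0) :
    ‖x‖ ≤ 2 * ‖y₀‖ := by
  have hx_eq : x = -(y₀ + M x) := (isFixedPt_neg_add_iff.mpr h).symm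
  have hquad : K * ‖x‖ * ‖x‖ ≤ 1 / 4 * ‖x‖ := by
    have : K * ‖x‖ ≤ 1 / 4 := by nlinarith [mul_le_mul_of_nonneg_left hx hK]
    exact mul_le_mul_of_nonneg_right this (norm_nonneg x)
  have : ‖x‖ ≤ ‖y₀‖ + 1 / 4 * ‖x‖ := calc
    ‖x‖ = ‖y₀ + M x‖ := by rw [hx_eq, norm_neg, ← hx_eq]
    _ ≤ ‖y₀‖ + ‖M x‖ := norm_add_le _ _
    _ ≤ ‖y₀‖ + 1 / 4 * ‖x‖ := by linarith [hM.norm_le x]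
  linarith [norm_nonneg y₀]

theorem mapsTo_closedBall_neg_add (hM : IsQuadraticRemainder K M) (hK : 0 ≤ K)
    (hKr : 4 * K * r ≤ 1) (hy₀ : ‖y₀‖ ≤ r / 2) :
    MapsTo (fun x ↦ -(y₀ + M x)) (closedBall 0 r) (closedBall 0 r) := by
  have hr : 0 ≤ r := by linarith [norm_nonneg y₀]
  intro x hx
  rw [mem_closedBall_zero_iff] at hx ⊢
  have hMx : ‖M x‖ ≤ r / 4 := calc
    ‖M x‖ ≤ K * ‖x‖ * ‖x‖ := hM.norm_le x
    _ ≤ K * r * r := by gcongr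
    _ ≤ r / 4 := by nlinarith [(norm_nonneg x).trans hx]
  calc ‖-(y₀ + M x)‖ ≤ ‖y₀‖ + ‖M x‖ := by rw [norm_neg]; exact norm_add_le _ _
    _ ≤ r := by linarith

variable [CompleteSpace E]

theorem existsUnique_add_add_eq_zero (hM : IsQuadraticRemainder K M) (hK : 0 ≤ K)
    (hKr : 4 * K * r ≤ 1) (hy₀ : ‖y₀‖ ≤ r / 2) :
    ∃! x, ‖x‖ ≤ r ∧ y₀ + x + M x = 0 := by
  have hr : 0 ≤ r := by linarith [norm_nonneg y₀]
  have hmaps := mapsTo_closedBall_neg_add hM hK hKr hy₀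
  have hcontr : ContractingWith (1 / 2) (hmaps.restrict _ _ _) := by
    refine ⟨by norm_num, LipschitzWith.of_dist_le_mul fun x y ↦ ?_⟩
    simpa [Subtype.dist_eq, dist_eq_norm, neg_add_eq_sub, norm_sub_rev (M y)] using
      hM.norm_sub_le_half_of_mem_closedBall hK hKr x.2 y.2
  simpa only [mem_closedBall_zero_iff, isFixedPt_neg_add_iff] using
    hcontr.existsUnique_isFixedPt_of_mapsTo isClosed_closedBall.isComplete
      (nonempty_closedBall.mpr hr)

end IdentityPlusQuadratic

/-- Floer–Picard lemma, invertible case: if `f(x) = f(0) + Dx + N(x)` with `D`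
an invertible bounded operator with bounded inverse `Q`, `N` quadratic, and
`‖Qf(0)‖ ≤ 1/(8C‖Q‖)`, then `f` has a unique zero in the ball of radius
`1/(4C‖Q‖)`, and this zero `x*` satisfies `‖x*‖ ≤ 2‖Qf(0)‖`. -/
theorem floer_picard_invertible (X B : Type*)
    [NormedAddCommGroup X] [NormedSpace ℝ X] [CompleteSpace X]
    [NormedAddCommGroup B] [NormedSpace ℝ B]
    (f : X → B) (D : X →L[ℝ] B) (Q : B →L[ℝ] X)
    (hQD : ∀ x, Q (D x) = x) (hDQ : ∀ b, D (Q b) = b)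
    (N : X → B) (hf : ∀ x, f x = f 0 + D x + N x) (hN0 : N 0 = 0)
    (C : ℝ) (hC : 0 < C)
    (hN : ∀ x y : X, ‖N x - N y‖ ≤ C * ‖x - y‖ * (‖x‖ + ‖y‖))
    (hsmall : ‖Q (f 0)‖ ≤ 1 / (8 * C * ‖Q‖)) :
    (∃! x : X, ‖x‖ ≤ 1 / (4 * C * ‖Q‖) ∧ f x = 0) ∧
    (∀ x : X, ‖x‖ ≤ 1 / (4 * C * ‖Q‖) → f x = 0 → ‖x‖ ≤ 2 * ‖Q (f 0)‖) := by
  have hQN : IsQuadraticRemainder (C * ‖Q‖) (Q ∘ N) :=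
    IsQuadraticRemainder.comp_continuousLinearMap ⟨hN0, hN⟩ Q
  have hK : 0 ≤ C * ‖Q‖ := by positivity
  -- also when `‖Q‖ = 0`, where the radius is the junk value `1 / 0 = 0`
  have hKr : 4 * (C * ‖Q‖) * (1 / (4 * C * ‖Q‖)) ≤ 1 := by
    rw [← mul_assoc, mul_one_div]; exact div_self_le_one _
  have hy₀ : ‖Q (f 0)‖ ≤ 1 / (4 * C * ‖Q‖) / 2 := by convert hsmall using 1; ring
  have hzero : ∀ x, f x = 0 ↔ Q (f 0) + x + (Q ∘ N) x = 0 := fun x ↦ by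
    rw [comp_apply, ← hQD x, ← map_add, ← map_add, hQD x, ← hf]
    exact ⟨fun h ↦ by rw [h, map_zero], fun h ↦ by rw [← hDQ (f x), h, map_zero]⟩
  simp only [hzero]
  exact ⟨existsUnique_add_add_eq_zero hQN hK hKr hy₀,
    fun x hx ↦ norm_le_two_mul_of_add_add_eq_zero hQN hK hKr hx⟩
end
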